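/- arXiv:1401.2538 — 2 statements merged into one kernel-verified Lean document; each statement's English description precedes it below -/
import Mathlib

section
/- Let G be a finite simple graph and let [V_0, V_1, …, V_p] (p ≥ 1) be a separation of G. Then the subgraphs G[V_0], G(V_1), …, G(V_p) form a disjoint partition of the edges of G: every edge of G lies in exactly one of the edge sets E(G[V_0]), E(G(V_1)), …, E(G(V_p)). -/
/-- `Nbr G V`: vertices outside `V` adjacent in `G` to some vertex of `V`. -/
def Nbr {α : Type*} (G : SimpleGraph α) (V : Set α) : Set α :=
  {v | v ∉ V ∧ ∃ u ∈ V, G.Adj u v}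


/-- `gSub G V` is the subgraph `G(V)`: induced by `V ∪ Nbr G V`, with the
edges joining two vertices of `Nbr G V` removed. -/
def gSub {α : Type*} (G : SimpleGraph α) (V : Set α) : G.Subgraph where
  verts := V ∪ Nbr G V
  Adj u v := G.Adj u v ∧ (u ∈ V ∨ v ∈ V)
  adj_sub h := h.1
  edge_vert {u v} h := by
    rcases h.2 with hu | hv
    · exact Or.inl hu
    · by_cases hu : u ∈ V
      · exact Or.inl hu
      · exact Or.inr ⟨hu, v, hv, h.1.symm⟩
  symm := ⟨fun _ _ h => ⟨h.1.symm, h.2.symm⟩⟩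


/-- `gInd G V` is the induced subgraph `G[V]`. -/
def gInd {α : Type*} (G : SimpleGraph α) (V : Set α) : G.Subgraph where
  verts := V
  Adj u v := G.Adj u v ∧ u ∈ V ∧ v ∈ V
  adj_sub h := h.1
  edge_vert h := h.2.1
  symm := ⟨fun _ _ h => ⟨h.1.symm, h.2.2, h.2.1⟩⟩


/-!
An edge with an endpoint in some `V i`, `i ≥ 1`, lies in `G(V i)`, and otherwise both endpoints lie
in `V 0`, so it lies in `G[V 0]`. Two distinct pieces share no edge: an edge of both `G(V i)` and
`G(V j)` would either have an endpoint in both parts or join `V i` to `V j`, and an edge of both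
`G[V 0]` and `G(V j)` would have an endpoint in both `V 0` and `V j`.
-/

section

variable {α : Type*} {G : SimpleGraph α}

theorem gInd_adj {A : Set α} {u v : α} : (gInd G A).Adj u v ↔ G.Adj u v ∧ u ∈ A ∧ v ∈ A :=
  Iff.rfl

theorem gSub_adj {A : Set α} {u v : α} : (gSub G A).Adj u v ↔ G.Adj u v ∧ (u ∈ A ∨ v ∈ A) :=
  Iff.rfl

theorem disjoint_gInd_gSub_edgeSet {A B : Set α} (hAB : Disjoint A B) :
    Disjoint (gInd G A).edgeSet (gSub G B).edgeSet := by
  refine Set.disjoint_left.mpr fun e => ?_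
  induction e using Sym2.ind with
  | _ u v =>
    simp only [SimpleGraph.Subgraph.mem_edgeSet, gInd_adj, gSub_adj]
    rintro ⟨-, hu, hv⟩ ⟨-, hu' | hv'⟩
    exacts [hAB.notMem_of_mem_left hu hu', hAB.notMem_of_mem_left hv hv']

theorem disjoint_gSub_edgeSet {A B : Set α} (hAB : Disjoint A B)
    (hsep : ∀ u ∈ A, ∀ w ∈ B, ¬ G.Adj u w) :
    Disjoint (gSub G A).edgeSet (gSub G B).edgeSet := by
  refine Set.disjoint_left.mpr fun e => ?_
  induction e using Sym2.ind with
  | _ u v =>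
    simp only [SimpleGraph.Subgraph.mem_edgeSet, gSub_adj]
    rintro ⟨huv, hu | hv⟩ ⟨-, hu' | hv'⟩
    exacts [hAB.notMem_of_mem_left hu hu', hsep u hu v hv' huv,
      hsep v hv u hu' huv.symm, hAB.notMem_of_mem_left hv hv']

def partEdgeSet (G : SimpleGraph α) (V : ℕ → Set α) (i : ℕ) : Set (Sym2 α) :=
  if i = 0 then (gInd G (V 0)).edgeSet else (gSub G (V i)).edgeSet

theorem partEdgeSet_zero (V : ℕ → Set α) : partEdgeSet G V 0 = (gInd G (V 0)).edgeSet :=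
  if_pos rfl

theorem partEdgeSet_of_ne_zero (V : ℕ → Set α) {i : ℕ} (hi : i ≠ 0) :
    partEdgeSet G V i = (gSub G (V i)).edgeSet :=
  if_neg hi

theorem exists_mem_partEdgeSet {p : ℕ} {V : ℕ → Set α} (hcover : ∀ v, ∃ i, i ≤ p ∧ v ∈ V i)
    {e : Sym2 α} (he : e ∈ G.edgeSet) : ∃ i ≤ p, e ∈ partEdgeSet G V i := by
  induction e using Sym2.ind with
  | _ u v =>
    obtain ⟨i, hip, hu⟩ := hcover u
    obtain ⟨j, hjp, hv⟩ := hcover v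
    by_cases hi0 : i = 0
    · subst hi0
      by_cases hj0 : j = 0
      · subst hj0
        exact ⟨0, p.zero_le, by rw [partEdgeSet_zero]; exact ⟨he, hu, hv⟩⟩
      · exact ⟨j, hjp, by rw [partEdgeSet_of_ne_zero V hj0]; exact ⟨he, Or.inr hv⟩⟩
    · exact ⟨i, hip, by rw [partEdgeSet_of_ne_zero V hi0]; exact ⟨he, Or.inl hu⟩⟩

theorem disjoint_partEdgeSet {p : ℕ} {V : ℕ → Set α}
    (hdisj : ∀ i i', i ≤ p → i' ≤ p → i ≠ i' → Disjoint (V i) (V i'))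
    (hsep : ∀ i i', 1 ≤ i → i ≤ p → 1 ≤ i' → i' ≤ p → i ≠ i' →
      ∀ u ∈ V i, ∀ w ∈ V i', ¬ G.Adj u w)
    {i j : ℕ} (hip : i ≤ p) (hjp : j ≤ p) (hij : i ≠ j) :
    Disjoint (partEdgeSet G V i) (partEdgeSet G V j) := by
  rcases Nat.eq_zero_or_pos i with rfl | hi0 <;> rcases Nat.eq_zero_or_pos j with rfl | hj0
  · exact absurd rfl hij
  · rw [partEdgeSet_zero, partEdgeSet_of_ne_zero V hj0.ne']
    exact disjoint_gInd_gSub_edgeSet (hdisj 0 j hip hjp hij)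
  · rw [partEdgeSet_zero, partEdgeSet_of_ne_zero V hi0.ne']
    exact (disjoint_gInd_gSub_edgeSet (hdisj 0 i hjp hip hij.symm)).symm
  · rw [partEdgeSet_of_ne_zero V hi0.ne', partEdgeSet_of_ne_zero V hj0.ne']
    exact disjoint_gSub_edgeSet (hdisj i j hip hjp hij) (hsep i j hi0 hip hj0 hjp hij)

end

theorem separation_edge_partition_general {α : Type*} (G : SimpleGraph α)
    (p : ℕ) (V : ℕ → Set α)
    (hdisj : ∀ i i', i ≤ p → i' ≤ p → i ≠ i' → Disjoint (V i) (V i'))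
    (hcover : ∀ v, ∃ i, i ≤ p ∧ v ∈ V i)
    (hsep : ∀ i i', 1 ≤ i → i ≤ p → 1 ≤ i' → i' ≤ p → i ≠ i' →
      ∀ u ∈ V i, ∀ w ∈ V i', ¬ G.Adj u w) :
    ∀ e ∈ G.edgeSet, ∃! i, i ≤ p ∧
      e ∈ (if i = 0 then (gInd G (V 0)).edgeSet else (gSub G (V i)).edgeSet) := by
  intro e he
  obtain ⟨i, hip, hi⟩ := exists_mem_partEdgeSet hcover he
  refine ⟨i, ⟨hip, hi⟩, fun j ⟨hjp, hj⟩ => ?_⟩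
  by_contra hji
  exact Set.disjoint_left.mp (disjoint_partEdgeSet hdisj hsep hjp hip hji) hj hi

/-- For a separation `[V 0, V 1, …, V p]` of a finite simple graph `G`, the
subgraphs `G[V 0], G(V 1), …, G(V p)` form a disjoint partition of the edges
of `G`: every edge of `G` lies in exactly one of their edge sets. -/
theorem separation_edge_partition {α : Type*} [Fintype α] (G : SimpleGraph α)
    (p : ℕ) (V : ℕ → Set α) (hp : 1 ≤ p)
    (hdisj : ∀ i i', i ≤ p → i' ≤ p → i ≠ i' → Disjoint (V i) (V i'))
    (hcover : ∀ v, ∃ i, i ≤ p ∧ v ∈ V i)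
    (hsep : ∀ i i', 1 ≤ i → i ≤ p → 1 ≤ i' → i' ≤ p → i ≠ i' →
      ∀ u ∈ V i, ∀ w ∈ V i', ¬ G.Adj u w) :
    ∀ e ∈ G.edgeSet, ∃! i, i ≤ p ∧
      e ∈ (if i = 0 then (gInd G (V 0)).edgeSet else (gSub G (V i)).edgeSet) :=
  separation_edge_partition_general G p V hdisj hcover hsep
end

section
/- Let n ≥ 1, r > 0, and c ≥ 0 be real numbers. For each integer i ≥ 1, let I_i be a finite index set and let w_i : I_i → ℝ and s_i : I_i → ℝ be functions such that for every S ∈ I_i: (a) r²·(3/2)^{i-1} < w_i(S) ≤ r²·(3/2)^i, (b) 0 ≤ s_i(S) ≤ c·√(w_i(S)), and (c) Σ_{S ∈ I_i} w_i(S) ≤ n. Then for every positive integer N, Σ_{i=1}^{N} Σ_{S ∈ I_i} s_i(S) ≤ 10·c·n/r. (This is the counting argument by which the paper bounds the total size of the separators taken from a separator decomposition: grouping the tree vertices S by the geometric scale of their offspring count w(S), using |I_i| < n/(r²·(3/2)^{i-1}) and |S| ≤ c·√(w(S)), and summing the resulting geometric series to obtain a total of O(n/r).) -/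
/-- **Geometric-scale counting argument for separator sizes.**
Let `n ≥ 1`, `r > 0`, `c ≥ 0`.  For each `i ≥ 1`, let `I i` be a finite index
set with weights `w i S` satisfying `r² (3/2)^(i-1) < w i S ≤ r² (3/2)^i`,
sizes `0 ≤ s i S ≤ c √(w i S)`, and total weight `Σ_{S ∈ I i} w i S ≤ n`.
Then for every `N ≥ 1`, `Σ_{i=1}^N Σ_{S ∈ I i} s i S ≤ 10 c n / r`. -/
theorem separator_size_sum {ι : Type*} (n r c : ℝ) (hn : 1 ≤ n) (hr : 0 < r) (hc : 0 ≤ c)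
    (I : ℕ → Finset ι) (w s : ℕ → ι → ℝ)
    (hlow : ∀ i, 1 ≤ i → ∀ S ∈ I i, r ^ 2 * (3 / 2 : ℝ) ^ (i - 1) < w i S)
    (hhigh : ∀ i, 1 ≤ i → ∀ S ∈ I i, w i S ≤ r ^ 2 * (3 / 2 : ℝ) ^ i)
    (hs0 : ∀ i, 1 ≤ i → ∀ S ∈ I i, 0 ≤ s i S)
    (hs : ∀ i, 1 ≤ i → ∀ S ∈ I i, s i S ≤ c * Real.sqrt (w i S))
    (hw : ∀ i, 1 ≤ i → ∑ S ∈ I i, w i S ≤ n) :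
    ∀ N : ℕ, 1 ≤ N → ∑ i ∈ Finset.Icc 1 N, ∑ S ∈ I i, s i S ≤ 10 * c * n / r := by
  intro N hN
  set q : ℝ := Real.sqrt (2 / 3) with hq
  have hq0 : 0 ≤ q := Real.sqrt_nonneg _
  have hq9 : q ≤ 9 / 10 := by
    rw [hq, show (9 / 10 : ℝ) = Real.sqrt ((9/10)^2) by rw [Real.sqrt_sq]; norm_num]
    exact Real.sqrt_le_sqrt (by norm_num)
  -- key per-scale bound
  have key : ∀ i, 1 ≤ i → ∑ S ∈ I i, s i S ≤ c * n / r * q ^ (i - 1) := by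
    intro i hi
    have hpow : (0:ℝ) < (3/2 : ℝ) ^ (i - 1) := by positivity
    have hd : (0:ℝ) < r * Real.sqrt ((3/2 : ℝ) ^ (i - 1)) := by positivity
    have step : ∀ S ∈ I i, s i S ≤ c * w i S / (r * Real.sqrt ((3/2 : ℝ) ^ (i - 1))) := by
      intro S hS
      have hwpos : (0:ℝ) < w i S :=
        lt_trans (by positivity) (hlow i hi S hS)
      have hsqrtw : (0:ℝ) < Real.sqrt (w i S) := Real.sqrt_pos.2 hwpos
      have h1 : r * Real.sqrt ((3/2 : ℝ) ^ (i - 1)) ≤ Real.sqrt (w i S) := by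
        rw [show r * Real.sqrt ((3/2 : ℝ) ^ (i - 1))
            = Real.sqrt (r ^ 2 * (3/2 : ℝ) ^ (i - 1)) by
          rw [Real.sqrt_mul (by positivity), Real.sqrt_sq hr.le]]
        exact Real.sqrt_le_sqrt (hlow i hi S hS).le
      have h2 : Real.sqrt (w i S) ≤ w i S / (r * Real.sqrt ((3/2 : ℝ) ^ (i - 1))) := by
        rw [le_div_iff₀ hd]
        calc Real.sqrt (w i S) * (r * Real.sqrt ((3/2 : ℝ) ^ (i - 1)))
            ≤ Real.sqrt (w i S) * Real.sqrt (w i S) :=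
              mul_le_mul_of_nonneg_left h1 hsqrtw.le
          _ = w i S := Real.mul_self_sqrt hwpos.le
      calc s i S ≤ c * Real.sqrt (w i S) := hs i hi S hS
        _ ≤ c * (w i S / (r * Real.sqrt ((3/2 : ℝ) ^ (i - 1)))) :=
            mul_le_mul_of_nonneg_left h2 hc
        _ = c * w i S / (r * Real.sqrt ((3/2 : ℝ) ^ (i - 1))) := by ring
    calc ∑ S ∈ I i, s i S
        ≤ ∑ S ∈ I i, c * w i S / (r * Real.sqrt ((3/2 : ℝ) ^ (i - 1))) :=
          Finset.sum_le_sum step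
      _ = c * (∑ S ∈ I i, w i S) / (r * Real.sqrt ((3/2 : ℝ) ^ (i - 1))) := by
          rw [Finset.mul_sum, Finset.sum_div]
      _ ≤ c * n / (r * Real.sqrt ((3/2 : ℝ) ^ (i - 1))) := by
          gcongr
          exact hw i hi
      _ = c * n / r * q ^ (i - 1) := by
          have hsq : ∀ k : ℕ, Real.sqrt ((3/2 : ℝ) ^ k) = Real.sqrt (3/2) ^ k := by
            intro k
            induction k with
            | zero => simp
            | succ k ih => rw [pow_succ, pow_succ, Real.sqrt_mul (by positivity), ih]
          rw [hsq, hq, show (2/3 : ℝ) = (3/2 : ℝ)⁻¹ by norm_num, Real.sqrt_inv, inv_pow,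
            div_mul_eq_div_div, div_eq_mul_inv (c * n / r)]
  have hgeom : ∑ i ∈ Finset.Icc 1 N, q ^ (i - 1) ≤ 10 := by
    have : ∑ i ∈ Finset.Icc 1 N, q ^ (i - 1) = ∑ k ∈ Finset.range N, q ^ k := by
      rw [show Finset.Icc 1 N = Finset.Ico 1 (N + 1) by rfl, Finset.sum_Ico_eq_sum_range]
      simp
    rw [this]
    have hq1 : q < 1 := lt_of_le_of_lt hq9 (by norm_num)
    calc ∑ k ∈ Finset.range N, q ^ k ≤ (1 - q)⁻¹ :=
          sum_le_hasSum _ (fun k _ => pow_nonneg hq0 k) (hasSum_geometric_of_lt_one hq0 hq1)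
      _ ≤ 10 := by
        rw [inv_le_comm₀ (by linarith) (by norm_num)]
        linarith
  have hcn : 0 ≤ c * n / r := by positivity
  calc ∑ i ∈ Finset.Icc 1 N, ∑ S ∈ I i, s i S
      ≤ ∑ i ∈ Finset.Icc 1 N, c * n / r * q ^ (i - 1) :=
        Finset.sum_le_sum fun i hi => key i (Finset.mem_Icc.1 hi).1
    _ = c * n / r * ∑ i ∈ Finset.Icc 1 N, q ^ (i - 1) := by rw [Finset.mul_sum]
    _ ≤ c * n / r * 10 := mul_le_mul_of_nonneg_left hgeom hcn
    _ = 10 * c * n / r := by ring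
end
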